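/- The feasible set of the primal weighting problem is empty if and only if there exist (α, β, γ) ∈ ℝ^N × ℝ^T × ℝ^p such that α_i + β_t + ψ_itᵀγ ≥ 0 for all (i,t) and W_it = 1{α_i + β_t + ψ_itᵀγ > 0} for all (i,t). -/

import Mathlib

/-!
Write `V ⊆ ℝ^{N×T}` for the subspace cut out by the unit sums, period sums and covariate
moments. Since the feasible set is a slice of a cone, it is empty iff every `ω ∈ V` that is
nonnegative on the treated cells vanishes on them. By Stiemke's theorem this holds iff some linear
form vanishing on `V` is positive on the treated cells and zero on the others; and the forms
vanishing on `V` are the linear combinations of the constraint forms, whose values on the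
standard basis are exactly the vectors `α_i + β_t + ψ_itᵀγ`.
-/

open Module LinearMap

lemma Submodule.apply_eq_zero_of_forall_lt_apply {E : Type*} [AddCommGroup E] [Module ℝ E]
    {L : Submodule ℝ E} {g : E →ₗ[ℝ] ℝ} {v : ℝ} (hv : ∀ x ∈ L, v < g x) {x : E} (hx : x ∈ L) :
    g x = 0 := by
  by_contra hgx
  have := hv (((v - 1) / g x) • x) (L.smul_mem _ hx)
  rw [map_smul, smul_eq_mul, div_mul_cancel₀ _ hgx] at this
  linarith

lemma Module.Dual.apply_eq_sum_mul_apply_single {ι : Type*} [Fintype ι] [DecidableEq ι]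
    (f : Dual ℝ (ι → ℝ)) (ω : ι → ℝ) : f ω = ∑ j, ω j * f (Pi.single j 1) := by
  conv_lhs => rw [← Finset.univ_sum_single ω]
  simp only [map_sum]
  refine Finset.sum_congr rfl fun j _ => ?_
  rw [← smul_eq_mul, ← map_smul, ← Pi.single_smul, smul_eq_mul, mul_one]

/-- Stiemke's transposition theorem, relative to the coordinates in `S`. -/
theorem Submodule.eq_zero_on_of_nonneg_on_iff_exists_dual_pos {ι : Type*} [Fintype ι]
    [DecidableEq ι] (V : Submodule ℝ (ι → ℝ)) (S : Set ι) :
    (∀ ω ∈ V, (∀ j ∈ S, 0 ≤ ω j) → ∀ j ∈ S, ω j = 0) ↔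
      ∃ f : Dual ℝ (ι → ℝ), V ≤ ker f ∧
        (∀ j ∈ S, 0 < f (Pi.single j 1)) ∧ ∀ j ∉ S, f (Pi.single j 1) = 0 := by
  classical
  constructor
  · intro hV
    -- Separate the standard simplex of `ℝ^S` from the restriction of `V` to `S`.
    let π : (ι → ℝ) →ₗ[ℝ] S → ℝ := funLeft ℝ ℝ Subtype.val
    have hdisj : Disjoint (stdSimplex ℝ S) (V.map π : Set (S → ℝ)) := by
      rw [Set.disjoint_left]
      rintro _ hu ⟨ω, hω, rfl⟩
      have hπω : π ω = 0 := funext fun j => hV ω hω (fun j hj => hu.1 ⟨j, hj⟩) j j.2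
      simpa [hπω] using hu.2
    obtain ⟨g, u, v, hgu, huv, hvg⟩ := geometric_hahn_banach_compact_closed
      (convex_stdSimplex ℝ S) (isCompact_stdSimplex ℝ S) (V.map π).convex
      (V.map π).closed_of_finiteDimensional hdisj
    have hv : v < 0 := by simpa using hvg 0 (V.map π).zero_mem
    refine ⟨-((g : (S → ℝ) →ₗ[ℝ] ℝ) ∘ₗ π), fun ω hω => ?_, fun j hj => ?_, fun j hj => ?_⟩
    · simpa using Submodule.apply_eq_zero_of_forall_lt_apply (g := (g : (S → ℝ) →ₗ[ℝ] ℝ)) hvg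
        (Submodule.mem_map_of_mem hω)
    · have hπ : π (Pi.single j 1) = Pi.single ⟨j, hj⟩ 1 := by
        ext k; simp [π, Pi.single_apply, Subtype.ext_iff]
      have := hgu _ (single_mem_stdSimplex ℝ ⟨j, hj⟩)
      simp only [LinearMap.neg_apply, coe_comp, Function.comp_apply, hπ,
        ContinuousLinearMap.coe_coe, Left.neg_pos_iff]
      linarith
    · have hπ : π (Pi.single j 1) = 0 := by
        ext k; simp [π, ne_of_mem_of_not_mem k.2 hj]
      simp [hπ]
  · rintro ⟨f, hVf, hpos, hzero⟩ ω hω hnn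
    have hterm : ∀ j, 0 ≤ ω j * f (Pi.single j 1) := fun j => by
      by_cases hj : j ∈ S
      · exact mul_nonneg (hnn j hj) (hpos j hj).le
      · simp [hzero j hj]
    have hsum : ∑ j, ω j * f (Pi.single j 1) = 0 := by
      rw [← f.apply_eq_sum_mul_apply_single]; exact hVf hω
    rw [Finset.sum_eq_zero_iff_of_nonneg fun j _ => hterm j] at hsum
    exact fun j hj => (mul_eq_zero.mp (hsum j (Finset.mem_univ j))).resolve_right (hpos j hj).ne'

section PrimalWeighting

variable {N T p : ℕ}

/-- The equality constraints of the primal weighting problem, as linear forms on `ℝ^{N×T}`. -/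
def balanceForm (ψ : Fin N → Fin T → Fin p → ℝ) :
    Fin N ⊕ Fin T ⊕ Fin p → Dual ℝ (Fin N × Fin T → ℝ)
  | .inl i => ∑ t, proj (i, t)
  | .inr (.inl t) => ∑ i, proj (i, t)
  | .inr (.inr j) => ∑ q, ψ q.1 q.2 j • proj q

lemma uncurry_mem_iInf_ker_balanceForm_iff {ψ : Fin N → Fin T → Fin p → ℝ}
    {ω : Fin N → Fin T → ℝ} :
    Function.uncurry ω ∈ ⨅ k, ker (balanceForm ψ k) ↔
      (∀ t, ∑ i, ω i t = 0) ∧ (∀ i, ∑ t, ω i t = 0) ∧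
        ∀ j, ∑ i, ∑ t, ω i t * ψ i t j = 0 := by
  simp only [Submodule.mem_iInf, mem_ker, Sum.forall, balanceForm]
  simp [Fintype.sum_prod_type, mul_comm, and_left_comm]

lemma sum_smul_balanceForm_apply_single (ψ : Fin N → Fin T → Fin p → ℝ)
    (c : Fin N ⊕ Fin T ⊕ Fin p → ℝ) (q : Fin N × Fin T) :
    (∑ k, c k • balanceForm ψ k) (Pi.single q 1) =
      c (.inl q.1) + c (.inr (.inl q.2)) + ∑ j, ψ q.1 q.2 j * c (.inr (.inr j)) := by
  obtain ⟨i, t⟩ := q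
  simp [Fintype.sum_sum_type, balanceForm, Pi.single_apply, ite_and, mul_comm, add_assoc]

lemma exists_dual_iInf_ker_balanceForm_le_iff (ψ : Fin N → Fin T → Fin p → ℝ)
    (P : (Fin N × Fin T → ℝ) → Prop) :
    (∃ f : Dual ℝ (Fin N × Fin T → ℝ),
        ⨅ k, ker (balanceForm ψ k) ≤ ker f ∧ P fun q => f (Pi.single q 1)) ↔
      ∃ (α : Fin N → ℝ) (β : Fin T → ℝ) (γ : Fin p → ℝ),
        P fun q => α q.1 + β q.2 + ∑ j, ψ q.1 q.2 j * γ j := by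
  constructor
  · rintro ⟨f, hf, hP⟩
    obtain ⟨c, rfl⟩ :=
      (Submodule.mem_span_range_iff_exists_fun ℝ).1 (mem_span_of_iInf_ker_le_ker hf)
    rw [funext (sum_smul_balanceForm_apply_single ψ c)] at hP
    exact ⟨fun i => c (.inl i), fun t => c (.inr (.inl t)), fun j => c (.inr (.inr j)), hP⟩
  · rintro ⟨α, β, γ, hP⟩
    refine ⟨∑ k, Sum.elim α (Sum.elim β γ) k • balanceForm ψ k, fun ω hω => ?_, ?_⟩
    · simp_all [Submodule.mem_iInf]
    · simpa only [sum_smul_balanceForm_apply_single, Sum.elim_inl, Sum.elim_inr] using hP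

def primalFeasibleSet (W : Fin N → Fin T → ℝ) (ψ : Fin N → Fin T → Fin p → ℝ) :
    Set (Fin N → Fin T → ℝ) :=
  {ω | 1 ≤ (1 / ((N : ℝ) * T)) * ∑ i, ∑ t, ω i t * W i t ∧
    (∀ t, ∑ i, ω i t = 0) ∧
    (∀ i, ∑ t, ω i t = 0) ∧
    (∀ j, (1 / ((N : ℝ) * T)) * ∑ i, ∑ t, ω i t * ψ i t j = 0) ∧
    (∀ i t, 0 ≤ ω i t * W i t)}

lemma primalFeasibleSet_eq_empty_iff {W : Fin N → Fin T → ℝ}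
    (hW01 : ∀ i t, W i t = 0 ∨ W i t = 1) (ψ : Fin N → Fin T → Fin p → ℝ) :
    primalFeasibleSet W ψ = ∅ ↔
      ∀ u ∈ ⨅ k, ker (balanceForm ψ k), (∀ q ∈ {q | W q.1 q.2 = 1}, 0 ≤ u q) →
        ∀ q ∈ {q | W q.1 q.2 = 1}, u q = 0 := by
  have hmul_nonneg : ∀ (x : ℝ) i t, (W i t = 1 → 0 ≤ x) → 0 ≤ x * W i t := fun x i t hx => by
    rcases hW01 i t with h | h <;> simp [h, hx]
  rw [Set.eq_empty_iff_forall_notMem]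
  constructor
  · intro hempty u hu hnn q hq
    by_contra hq0
    have hNT : (0 : ℝ) < N * T := by
      have := q.1.pos; have := q.2.pos; positivity
    set σ := ∑ q : Fin N × Fin T, u q * W q.1 q.2
    have hσ : 0 < σ := by
      have hq_pos : 0 < u q * W q.1 q.2 := by
        rw [hq, mul_one]; exact (hnn q hq).lt_of_ne' hq0
      exact hq_pos.trans_le <| Finset.single_le_sum
        (fun q _ => hmul_nonneg (u q) q.1 q.2 (hnn q)) (Finset.mem_univ q)
    -- Rescale `u` so that the first constraint becomes an equality.
    set c := N * T / σ
    obtain ⟨hcol, hrow, hmom⟩ := uncurry_mem_iInf_ker_balanceForm_iff (ψ := ψ)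
      (ω := Function.curry (c • u)) |>.1 (Submodule.smul_mem _ c hu)
    refine hempty (Function.curry (c • u)) ⟨?_, hcol, hrow, fun j => by rw [hmom j, mul_zero], ?_⟩
    · have hsum : ∑ i, ∑ t, Function.curry (c • u) i t * W i t = c * σ := by
        simp only [σ, Fintype.sum_prod_type, Function.curry_apply, Pi.smul_apply, smul_eq_mul,
          mul_assoc, ← Finset.mul_sum]
      rw [hsum, div_mul_cancel₀ _ hσ.ne', one_div_mul_cancel hNT.ne']
    · exact fun i t => hmul_nonneg _ i t fun h => mul_nonneg (div_pos hNT hσ).le (hnn (i, t) h)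
  · rintro hzero ω ⟨hW, hcol, hrow, hmom, hnn⟩
    have hNT : 1 / ((N : ℝ) * T) ≠ 0 := by
      rintro h; rw [h, zero_mul] at hW; linarith
    have hu : Function.uncurry ω ∈ ⨅ k, ker (balanceForm ψ k) :=
      uncurry_mem_iInf_ker_balanceForm_iff.2
        ⟨hcol, hrow, fun j => (mul_eq_zero.1 (hmom j)).resolve_left hNT⟩
    have hω := hzero _ hu fun ⟨i, t⟩ hq => by
      simpa [show W i t = 1 from hq] using hnn i t
    have hωW : ∀ i t, ω i t * W i t = 0 := fun i t => by
      rcases hW01 i t with h | h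
      · simp [h]
      · simpa [h] using hω (i, t) h
    norm_num [hωW] at hW

lemma nonneg_and_eq_ite_pos_iff {w x : ℝ} (hw : w = 0 ∨ w = 1) :
    (0 ≤ x ∧ w = if 0 < x then 1 else 0) ↔ (w = 1 → 0 < x) ∧ (w ≠ 1 → x = 0) := by
  grind

end PrimalWeighting

theorem primal_feasible_empty_iff_separation_general
    (N T p : ℕ)
    (W : Fin N → Fin T → ℝ) (hW01 : ∀ i t, W i t = 0 ∨ W i t = 1)
    (ψ : Fin N → Fin T → Fin p → ℝ) :
    {ω : Fin N → Fin T → ℝ |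
      1 ≤ (1 / ((N : ℝ) * T)) * ∑ i, ∑ t, ω i t * W i t ∧
      (∀ t, ∑ i, ω i t = 0) ∧
      (∀ i, ∑ t, ω i t = 0) ∧
      (∀ j, (1 / ((N : ℝ) * T)) * ∑ i, ∑ t, ω i t * ψ i t j = 0) ∧
      (∀ i t, 0 ≤ ω i t * W i t)} = ∅ ↔
    ∃ (α : Fin N → ℝ) (β : Fin T → ℝ) (γ : Fin p → ℝ),
      (∀ i t, 0 ≤ α i + β t + ∑ j, ψ i t j * γ j) ∧
      (∀ i t, W i t = if 0 < α i + β t + ∑ j, ψ i t j * γ j then 1 else 0) := by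
  refine (primalFeasibleSet_eq_empty_iff hW01 ψ).trans <|
    (Submodule.eq_zero_on_of_nonneg_on_iff_exists_dual_pos _ _).trans <|
    (exists_dual_iInf_ker_balanceForm_le_iff ψ fun s =>
      (∀ q ∈ {q | W q.1 q.2 = 1}, 0 < s q) ∧ ∀ q ∉ {q | W q.1 q.2 = 1}, s q = 0).trans <|
    exists₃_congr fun α β γ => ?_
  simp only [Prod.forall, ← forall_and]
  exact forall₂_congr fun i t => (nonneg_and_eq_ite_pos_iff (hW01 i t)).symm

/-- **Lemma 1 (Farkas characterization of infeasibility).**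
The feasible set of the primal weighting problem is empty if and only if there
exist `(α, β, γ) ∈ ℝ^N × ℝ^T × ℝ^p` with `α_i + β_t + ψ_itᵀγ ≥ 0` for all
`(i,t)` and `W_it = 1{α_i + β_t + ψ_itᵀγ > 0}` for all `(i,t)`. -/
theorem primal_feasible_empty_iff_separation
    (N T p : ℕ) (hN : 0 < N) (hT : 0 < T)
    (W : Fin N → Fin T → ℝ) (hW01 : ∀ i t, W i t = 0 ∨ W i t = 1)
    (ψ : Fin N → Fin T → Fin p → ℝ) :
    {ω : Fin N → Fin T → ℝ |
      1 ≤ (1 / ((N : ℝ) * T)) * ∑ i, ∑ t, ω i t * W i t ∧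
      (∀ t, ∑ i, ω i t = 0) ∧
      (∀ i, ∑ t, ω i t = 0) ∧
      (∀ j, (1 / ((N : ℝ) * T)) * ∑ i, ∑ t, ω i t * ψ i t j = 0) ∧
      (∀ i t, 0 ≤ ω i t * W i t)} = ∅ ↔
    ∃ (α : Fin N → ℝ) (β : Fin T → ℝ) (γ : Fin p → ℝ),
      (∀ i t, 0 ≤ α i + β t + ∑ j, ψ i t j * γ j) ∧
      (∀ i t, W i t = if 0 < α i + β t + ∑ j, ψ i t j * γ j then 1 else 0) :=
  primal_feasible_empty_iff_separation_general N T p W hW01 ψ
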